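/- Under the errors-in-variables model with U_1,…,U_K, ε mutually independent and (U_1,…,U_K,ε) independent of X*, assume all of X*_1,…,X*_K, U_1,…,U_K, ε are square-integrable. Let s = (s_1,…,s_K,s_y) ∈ ℝ^{K+1} be a point at which φ_{(X,Y)}(s) ≠ 0. Then for every 1 ≤ k_1 ≤ K, the mixed second-order logarithmic derivative of φ_{(X,Y)} in the directions s_{k_1} and s_y satisfies Λ_{k_1,y}[φ_{(X,Y)}](s) = Σ_{k_2=1}^K β_{k_2} · Λ_{k_1,k_2}[φ_{X*}](s_1 + β_1 s_y, …, s_K + β_K s_y). -/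

import Mathlib

open MeasureTheory ProbabilityTheory

/-- Characteristic function of a random vector `Z : Ω → (Fin d → ℝ)`. -/
noncomputable def charF {Ω : Type*} [MeasurableSpace Ω] (μ : Measure Ω) {d : ℕ}
    (Z : Ω → Fin d → ℝ) (s : Fin d → ℝ) : ℂ :=
  ∫ ω, Complex.exp (Complex.I * ((∑ k, s k * Z ω k : ℝ) : ℂ)) ∂μ

/-- Partial derivative of `φ : ℝ^d → ℂ` in the `j`-th coordinate direction. -/
noncomputable def pd {d : ℕ} (j : Fin d) (φ : (Fin d → ℝ) → ℂ) (s : Fin d → ℝ) : ℂ :=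
  fderiv ℝ φ s (Pi.single j 1)

/-- Second-order logarithmic derivative
`Λ_{j,k}[φ](s) = ∂_j∂_kφ(s)/φ(s) − (∂_jφ(s))(∂_kφ(s))/φ(s)²`. -/
noncomputable def Lam {d : ℕ} (j k : Fin d) (φ : (Fin d → ℝ) → ℂ) (s : Fin d → ℝ) : ℂ :=
  pd j (pd k φ) s / φ s - (pd j φ s) * (pd k φ s) / (φ s) ^ 2

/-!
By independence the joint characteristic function factors as
`φ_{(X,Y)}(s) = φ_{X*}(s₁ + β₁ s_y, …, s_K + β_K s_y) · φ_U(s₁, …, s_K) · φ_ε(s_y)`.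
The logarithmic Hessian is additive over products of nonvanishing factors and transforms
covariantly under linear changes of variables. The `U`-factor does not depend on `s_y` and the
`ε`-factor does not depend on `s_{k₁}`, so only the `X*`-factor contributes to `Λ_{k₁,y}`; the chain
rule, with `∂_y` pushed forward to the direction `β`, turns its contribution into
`∑_{k₂} β_{k₂} Λ_{k₁,k₂}[φ_{X*}]`.
-/

section LogHessian

variable {E F : Type*} [NormedAddCommGroup E] [NormedSpace ℝ E] [NormedAddCommGroup F]
  [NormedSpace ℝ F]

/-- The Hessian of `log φ` at `t`, written without choosing a branch of the logarithm. -/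
noncomputable def logHessian (φ : E → ℂ) (t : E) : E →L[ℝ] E →L[ℝ] ℂ :=
  (φ t)⁻¹ • fderiv ℝ (fderiv ℝ φ) t -
    (φ t ^ 2)⁻¹ • (ContinuousLinearMap.mul ℝ ℂ).bilinearComp (fderiv ℝ φ t) (fderiv ℝ φ t)

theorem logHessian_apply (φ : E → ℂ) (t v w : E) :
    logHessian φ t v w =
      fderiv ℝ (fderiv ℝ φ) t v w / φ t - fderiv ℝ φ t v * fderiv ℝ φ t w / φ t ^ 2 := by
  simp [logHessian, div_eq_inv_mul]

theorem Lam_eq_logHessian {d : ℕ} {φ : (Fin d → ℝ) → ℂ} {s : Fin d → ℝ}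
    (hφ : DifferentiableAt ℝ (fderiv ℝ φ) s) (j k : Fin d) :
    Lam j k φ s = logHessian φ s (Pi.single j 1) (Pi.single k 1) := by
  rw [logHessian_apply]
  unfold Lam pd
  rw [fderiv_clm_apply hφ (differentiableAt_const _)]
  simp

theorem logHessian_comp_clm {φ : E → ℂ} (hφ : ContDiff ℝ 2 φ) (T : F →L[ℝ] E) (s v w : F) :
    logHessian (fun x => φ (T x)) s v w = logHessian φ (T s) (T v) (T w) := by
  have hD : ∀ x u, fderiv ℝ (fun x => φ (T x)) x u = fderiv ℝ φ (T x) (T u) := fun x u => by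
    rw [← Function.comp_def, fderiv_comp x (hφ.differentiable two_ne_zero (T x))
      T.differentiableAt, T.fderiv]
    rfl
  have hD2 : fderiv ℝ (fderiv ℝ fun x => φ (T x)) s v w =
      fderiv ℝ (fderiv ℝ φ) (T s) (T v) (T w) := by
    simpa [iteratedFDeriv_two_apply, Function.comp_def] using
      congrArg (· ![v, w]) (T.iteratedFDeriv_comp_right hφ s le_rfl)
  simp only [logHessian_apply, hD, hD2]

theorem logHessian_mul {f g : E → ℂ} (hf : ContDiff ℝ 2 f) (hg : ContDiff ℝ 2 g) {s : E}
    (hfs : f s ≠ 0) (hgs : g s ≠ 0) :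
    logHessian (fun x => f x * g x) s = logHessian f s + logHessian g s := by
  have hf1 := hf.differentiable two_ne_zero
  have hg1 := hg.differentiable two_ne_zero
  have hf2 := (hf.fderiv_right one_add_one_eq_two.le).differentiable one_ne_zero s
  have hg2 := (hg.fderiv_right one_add_one_eq_two.le).differentiable one_ne_zero s
  have hD : fderiv ℝ (fun x => f x * g x) = fun x => f x • fderiv ℝ g x + g x • fderiv ℝ f x :=
    funext fun x => fderiv_fun_mul (hf1 x) (hg1 x)
  ext v w
  have hD2 : fderiv ℝ (fderiv ℝ fun x => f x * g x) s v w =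
      fderiv ℝ f s v * fderiv ℝ g s w + f s * fderiv ℝ (fderiv ℝ g) s v w
        + (fderiv ℝ g s v * fderiv ℝ f s w + g s * fderiv ℝ (fderiv ℝ f) s v w) := by
    rw [hD, fderiv_fun_add (f := fun x => f x • fderiv ℝ g x) (g := fun x => g x • fderiv ℝ f x)
      ((hf1 s).smul hg2) ((hg1 s).smul hf2), fderiv_fun_smul (hf1 s) hg2,
      fderiv_fun_smul (hg1 s) hf2]
    simp only [add_apply, smul_apply, ContinuousLinearMap.smulRight_apply, smul_eq_mul]
    ring
  simp only [add_apply, logHessian_apply, hD2, congrFun hD s, smul_apply, smul_eq_mul]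
  field_simp
  ring

end LogHessian

section CharF

variable {Ω : Type*} [MeasurableSpace Ω] {μ : Measure Ω}

theorem charF_eq_charFun_map {d : ℕ} {Z : Ω → Fin d → ℝ} (hZ : Measurable Z) (s : Fin d → ℝ) :
    charF μ Z s = charFun (μ.map fun ω => WithLp.toLp 2 (Z ω)) (WithLp.toLp 2 s) := by
  rw [charF, charFun_apply, integral_map (by fun_prop) (by fun_prop)]
  congr 1 with ω
  simp [PiLp.inner_apply, mul_comm]

theorem contDiff_charF [IsFiniteMeasure μ] {d n : ℕ} {Z : Ω → Fin d → ℝ} (hZ : Measurable Z)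
    (hZn : ∀ k, MemLp (fun ω => Z ω k) n μ) : ContDiff ℝ n (charF μ Z) := by
  have hmom : MemLp id n (μ.map fun ω => WithLp.toLp 2 (Z ω)) :=
    (memLp_map_measure_iff aestronglyMeasurable_id (by fun_prop)).2 (MemLp.of_eval_piLp hZn)
  rw [show charF μ Z = charFun (μ.map fun ω => WithLp.toLp 2 (Z ω)) ∘
      (EuclideanSpace.equiv (Fin d) ℝ).symm from funext (charF_eq_charFun_map hZ)]
  exact (contDiff_charFun hmom).comp (EuclideanSpace.equiv (Fin d) ℝ).symm.contDiff

theorem charF_eq_mul_of_indepFun {m n d : ℕ} {Z₁ : Ω → Fin m → ℝ} {Z₂ : Ω → Fin n → ℝ}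
    (hZ₁ : Measurable Z₁) (hZ₂ : Measurable Z₂) (hindep : IndepFun Z₁ Z₂ μ)
    {W : Ω → Fin d → ℝ} {s : Fin d → ℝ} {t₁ : Fin m → ℝ} {t₂ : Fin n → ℝ}
    (hs : ∀ ω, ∑ i, s i * W ω i = ∑ k, t₁ k * Z₁ ω k + ∑ k, t₂ k * Z₂ ω k) :
    charF μ W s = charF μ Z₁ t₁ * charF μ Z₂ t₂ := by
  have hexp : ∀ {p : ℕ} (t : Fin p → ℝ),
      Measurable fun v : Fin p → ℝ => Complex.exp (Complex.I * ((∑ k, t k * v k : ℝ) : ℂ)) :=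
    fun t => by fun_prop
  simp only [charF, hs, Complex.ofReal_add, mul_add, Complex.exp_add]
  exact hindep.integral_fun_comp_mul_comp hZ₁.aemeasurable hZ₂.aemeasurable
    (hexp t₁).aestronglyMeasurable (hexp t₂).aestronglyMeasurable

end CharF

theorem ProbabilityTheory.iIndepFun.indepFun_snoc {Ω β : Type*} [MeasurableSpace Ω]
    {μ : Measure Ω} [MeasurableSpace β] {n : ℕ} {f : Fin n → Ω → β} {g : Ω → β}
    (h : iIndepFun (Fin.snoc f g : Fin (n + 1) → Ω → β) μ) (hf : ∀ i, Measurable (f i))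
    (hg : Measurable g) :
    IndepFun (fun ω k => f k ω) g μ := by
  have hsnoc : ∀ i, Measurable ((Fin.snoc f g : Fin (n + 1) → Ω → β) i) :=
    Fin.lastCases (by simpa using hg) (fun k => by simpa using hf k)
  have hdisj : Disjoint (Finset.univ.map Fin.castSuccEmb) {Fin.last n} := by
    simp [Finset.disjoint_left, Fin.castSucc_ne_last]
  have h' := (h.indepFun_finset _ _ hdisj hsnoc).comp
    (φ := fun v k => v ⟨Fin.castSucc k, by simp⟩) (ψ := fun v => v ⟨Fin.last n, by simp⟩)
    (measurable_pi_lambda _ fun _ => measurable_pi_apply _)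
    (measurable_pi_apply (X := fun _ => β) _)
  simpa only [Function.comp_def, Fin.snoc_castSucc, Fin.snoc_last] using h'

section ErrorsInVariables

variable {K : ℕ}

noncomputable def initCLM (K : ℕ) : (Fin (K + 1) → ℝ) →L[ℝ] (Fin K → ℝ) :=
  ContinuousLinearMap.pi fun k => ContinuousLinearMap.proj k.castSucc

noncomputable def lastCLM (K : ℕ) : (Fin (K + 1) → ℝ) →L[ℝ] (Fin 1 → ℝ) :=
  ContinuousLinearMap.pi fun _ => ContinuousLinearMap.proj (Fin.last K)

noncomputable def shearCLM (β : Fin K → ℝ) : (Fin (K + 1) → ℝ) →L[ℝ] (Fin K → ℝ) :=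
  initCLM K + (ContinuousLinearMap.proj (Fin.last K)).smulRight β

@[simp] theorem initCLM_apply (x : Fin (K + 1) → ℝ) : initCLM K x = fun k => x k.castSucc := rfl

@[simp] theorem lastCLM_apply (x : Fin (K + 1) → ℝ) : lastCLM K x = fun _ => x (Fin.last K) := rfl

@[simp] theorem shearCLM_apply (β : Fin K → ℝ) (x : Fin (K + 1) → ℝ) :
    shearCLM β x = fun k => x k.castSucc + β k * x (Fin.last K) := by
  ext k
  simp [shearCLM, mul_comm]

theorem charF_errorsInVariables {Ω : Type*} [MeasurableSpace Ω] {μ : Measure Ω}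
    {Xstar : Ω → Fin K → ℝ} {U : Fin K → Ω → ℝ} {eps : Ω → ℝ} {β : Fin K → ℝ}
    {X : Fin K → Ω → ℝ} {Y : Ω → ℝ} (hXm : Measurable Xstar) (hUm : ∀ k, Measurable (U k))
    (hem : Measurable eps) (hX : ∀ k ω, X k ω = Xstar ω k + U k ω)
    (hY : ∀ ω, Y ω = ∑ k, β k * Xstar ω k + eps ω)
    (hUe : IndepFun (fun ω k => U k ω) eps μ)
    (hUeX : IndepFun (fun ω => (fun k => U k ω, eps ω)) Xstar μ) (x : Fin (K + 1) → ℝ) :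
    charF μ (fun ω => Fin.snoc (fun k => X k ω) (Y ω)) x =
      charF μ Xstar (shearCLM β x) *
        (charF μ (fun ω k => U k ω) (initCLM K x) * charF μ (fun ω _ => eps ω) (lastCLM K x)) := by
  have hUm' : Measurable fun ω k => U k ω := measurable_pi_lambda _ hUm
  have hsnoc : Measurable fun p : (Fin K → ℝ) × ℝ => (Fin.snoc p.1 p.2 : Fin (K + 1) → ℝ) := by
    fun_prop
  have hsplit := charF_eq_mul_of_indepFun (W := fun ω => Fin.snoc (fun k => X k ω) (Y ω))
    (Z₂ := fun ω => Fin.snoc (fun k => U k ω) (eps ω)) (s := x) (t₁ := shearCLM β x) (t₂ := x)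
    hXm (hsnoc.comp (hUm'.prodMk hem)) (hUeX.symm.comp measurable_id hsnoc) fun ω => by
      simp only [Fin.sum_univ_castSucc, Fin.snoc_castSucc, Fin.snoc_last, hX, hY, mul_add,
        add_mul, Finset.sum_add_distrib, Finset.mul_sum, shearCLM_apply, mul_assoc,
        mul_left_comm (x (Fin.last K))]
      ring
  have hnoise := charF_eq_mul_of_indepFun (W := fun ω => Fin.snoc (fun k => U k ω) (eps ω))
    (s := x) (t₁ := initCLM K x) (t₂ := lastCLM K x) hUm' (measurable_pi_lambda _ fun _ => hem)
    (hUe.comp measurable_id (measurable_pi_lambda (fun e (_ : Fin 1) => e) fun _ => measurable_id))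
    fun ω => by simp [Fin.sum_univ_castSucc]
  rw [hsplit, hnoise]

theorem Lam_castSucc_last_of_factorization {β : Fin K → ℝ} {A B : (Fin K → ℝ) → ℂ}
    {C : (Fin 1 → ℝ) → ℂ} (hA : ContDiff ℝ 2 A) (hB : ContDiff ℝ 2 B) (hC : ContDiff ℝ 2 C)
    {s : Fin (K + 1) → ℝ} (hne : A (shearCLM β s) * (B (initCLM K s) * C (lastCLM K s)) ≠ 0)
    (k₁ : Fin K) :
    Lam k₁.castSucc (Fin.last K)
        (fun x => A (shearCLM β x) * (B (initCLM K x) * C (lastCLM K x))) s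
      = ∑ k₂, (β k₂ : ℂ) * Lam k₁ k₂ A (shearCLM β s) := by
  have hA' : ContDiff ℝ 2 fun x => A (shearCLM β x) := hA.comp (shearCLM β).contDiff
  have hB' : ContDiff ℝ 2 fun x => B (initCLM K x) := hB.comp (initCLM K).contDiff
  have hC' : ContDiff ℝ 2 fun x => C (lastCLM K x) := hC.comp (lastCLM K).contDiff
  have hfderiv : ∀ {d} {φ : (Fin d → ℝ) → ℂ}, ContDiff ℝ 2 φ → ∀ t,
      DifferentiableAt ℝ (fderiv ℝ φ) t :=
    fun h t => (h.fderiv_right one_add_one_eq_two.le).differentiable one_ne_zero t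
  obtain ⟨hAs, hBCs⟩ := mul_ne_zero_iff.1 hne
  obtain ⟨hBs, hCs⟩ := mul_ne_zero_iff.1 hBCs
  rw [Lam_eq_logHessian (hfderiv (hA'.mul (hB'.mul hC')) s),
    logHessian_mul hA' (hB'.mul hC') hAs hBCs, logHessian_mul hB' hC' hBs hCs]
  simp only [add_apply, logHessian_comp_clm hA, logHessian_comp_clm hB, logHessian_comp_clm hC]
  have hshear_castSucc : shearCLM β (Pi.single k₁.castSucc 1) = Pi.single k₁ 1 := by
    ext k; simp [Pi.single_apply, Fin.castSucc_ne_last]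
  have hshear_last : shearCLM β (Pi.single (Fin.last K) 1) = ∑ k₂, β k₂ • Pi.single k₂ 1 := by
    ext k; simp [Fin.castSucc_ne_last, Pi.single_apply]
  have hinit_last : initCLM K (Pi.single (Fin.last K) 1) = 0 := by
    ext k; simp [Fin.castSucc_ne_last]
  have hlast_castSucc : lastCLM K (Pi.single k₁.castSucc 1) = 0 := by
    ext; simp [Fin.castSucc_ne_last]
  rw [hshear_castSucc, hshear_last, hinit_last, hlast_castSucc, map_sum]
  simp only [map_zero, zero_apply, add_zero, map_smul, Complex.real_smul,
    Lam_eq_logHessian (hfderiv hA _)]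

end ErrorsInVariables

/-- the mixed second-order logarithmic derivative of `φ_{(X,Y)}` in the
directions `s_{k₁}` and `s_y` equals `∑_{k₂} β_{k₂} Λ_{k₁,k₂}[φ_{X*}]` evaluated at
`(s₁ + β₁ s_y, …, s_K + β_K s_y)`. -/
theorem stmt2 {Ω : Type*} [MeasurableSpace Ω] (μ : Measure Ω) [IsProbabilityMeasure μ]
    (K : ℕ) (Xstar : Ω → Fin K → ℝ) (U : Fin K → Ω → ℝ) (eps : Ω → ℝ) (β : Fin K → ℝ)
    (X : Fin K → Ω → ℝ) (Y : Ω → ℝ)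
    (hXm : Measurable Xstar) (hUm : ∀ k, Measurable (U k)) (hem : Measurable eps)
    (hX : ∀ k ω, X k ω = Xstar ω k + U k ω)
    (hY : ∀ ω, Y ω = ∑ k, β k * Xstar ω k + eps ω)
    (hIndep1 : iIndepFun ((Fin.snoc U eps : Fin (K+1) → Ω → ℝ)) μ)
    (hIndep2 : IndepFun (fun ω => (fun k => U k ω, eps ω)) Xstar μ)
    (hL2X : ∀ k, MemLp (fun ω => Xstar ω k) 2 μ)
    (hL2U : ∀ k, MemLp (U k) 2 μ) (hL2e : MemLp eps 2 μ)
    (s : Fin (K+1) → ℝ)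
    (hne : charF μ (fun ω => Fin.snoc (fun k => X k ω) (Y ω)) s ≠ 0)
    (k1 : Fin K) :
    Lam (Fin.castSucc k1) (Fin.last K)
        (charF μ (fun ω => Fin.snoc (fun k => X k ω) (Y ω))) s
      = ∑ k2, (β k2 : ℂ) * Lam k1 k2 (charF μ Xstar)
          (fun k => s (Fin.castSucc k) + β k * s (Fin.last K)) := by
  have hUe := hIndep1.indepFun_snoc hUm hem
  rw [funext (charF_errorsInVariables (β := β) hXm hUm hem hX hY hUe hIndep2)] at hne ⊢
  rw [← shearCLM_apply]
  exact Lam_castSucc_last_of_factorization (contDiff_charF hXm hL2X)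
    (contDiff_charF (measurable_pi_lambda _ hUm) hL2U)
    (contDiff_charF (measurable_pi_lambda _ fun _ => hem) fun _ => hL2e) hne k1
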